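/- Let Θ₁ and Θ₂ be two distinct commuting involutive antimorphisms of A* for a finite alphabet A, and let u be a uniformly recurrent infinite word over A whose language is closed under both Θ₁ and Θ₂. Then there exists an integer N such that for all n > N: ΔC(n) + 4 ≥ P_{Θ₁}(n) + P_{Θ₂}(n) + P_{Θ₁}(n+1) + P_{Θ₂}(n+1). -/

import Mathlib

open scoped Classical

/-- The finite word `w` occurs in the infinite word `u` at position `i`. -/
def OccursAt {A : Type*} (u : ℕ → A) (w : List A) (i : ℕ) : Prop :=
  w = (List.range w.length).map fun k => u (i + k)

/-- The finite word `w` is a factor of the infinite word `u`. -/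
def IsFactor {A : Type*} (u : ℕ → A) (w : List A) : Prop :=
  ∃ i, OccursAt u w i

/-- The (involutive) antimorphism of `A*` induced by the letter map `θ`:
it reverses a word and applies `θ` letterwise. -/
def antim {A : Type*} (θ : A → A) (w : List A) : List A :=
  (w.map θ).reverse

/-- `w` is a `θ`-palindrome, i.e. a fixed point of the antimorphism induced by `θ`. -/
def IsPalin {A : Type*} (θ : A → A) (w : List A) : Prop :=
  antim θ w = w

/-- Factor complexity of the infinite word `u`. -/
noncomputable def fC {A : Type*} (u : ℕ → A) (n : ℕ) : ℕ :=
  Set.ncard {w : List A | w.length = n ∧ IsFactor u w}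

/-- `θ`-palindromic complexity of the infinite word `u`. -/
noncomputable def fP {A : Type*} (u : ℕ → A) (θ : A → A) (n : ℕ) : ℕ :=
  Set.ncard {w : List A | w.length = n ∧ IsFactor u w ∧ IsPalin θ w}

/-- `γ_Θ(w)`: the number of pairs `{a, θ a}` with `a` occurring in `w` and `a ≠ θ a`. -/
noncomputable def gammaTheta {A : Type*} (θ : A → A) (w : List A) : ℕ :=
  Set.ncard {s : Set A | ∃ a ∈ w, θ a ≠ a ∧ s = {a, θ a}}

/-- The set of `θ`-palindromic factors of the finite word `w`. -/
def palFactors {A : Type*} (θ : A → A) (w : List A) : Set (List A) :=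
  {p | p <:+: w ∧ IsPalin θ p}

/-- The `Θ`-defect of a finite word `w`. -/
noncomputable def defect {A : Type*} (θ : A → A) (w : List A) : ℤ :=
  (w.length : ℤ) + 1 - gammaTheta θ w - Set.ncard (palFactors θ w)

/-- The number of occurrences of `w` in the finite word `v`. -/
noncomputable def numOcc {A : Type*} (w v : List A) : ℕ :=
  Set.ncard {i : ℕ | i + w.length ≤ v.length ∧ w <+: v.drop i}

/-- `u` is uniformly recurrent: every factor occurs infinitely many times with
bounded gaps between consecutive occurrences. -/
def UniformlyRecurrent {A : Type*} (u : ℕ → A) : Prop :=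
  ∀ w : List A, IsFactor u w →
    ∃ B : ℕ, ∀ i : ℕ, ∃ j : ℕ, i ≤ j ∧ j ≤ i + B ∧ OccursAt u w j

/-!
Let `Θ₁, Θ₂` act on the factors of `u` of a fixed length through the group they generate. Since
`Θ₁ ≠ Θ₂`, some letter `c` has `Θ₁Θ₂ c ≠ c`; by uniform recurrence `c` occurs in every long factor,
so `Θ₁Θ₂` fixes no long factor. Then every orbit either has four elements and no palindromes, or
two elements that are both `Θ₁`- or both `Θ₂`-palindromes. Counting orbits (Burnside) gives
`C(m) + P_{Θ₁}(m) + P_{Θ₂}(m) = 4 · #orbits` and `C(m) = 2 · #orbits + 2 · #free orbits`.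
Each factor of length `n + 1` joins the orbits of its prefix and suffix of length `n`. This quotient
of the Rauzy graph is connected, and only free orbits give edges that are not loops, so there are at
most `1 + #free orbits` orbits of length `n`; the inequality follows by adding up.
-/

open Finset

namespace CommutingInvolutions

variable {α : Type*} {σ τ : α → α}

lemma apply_eq_of_apply_apply_eq (hτ : Function.Involutive τ) (hστ : Function.Commute σ τ)
    {x : α} (h : σ (τ x) = τ x) : σ x = x :=
  calc σ x = σ (τ (τ x)) := by rw [hτ x]
    _ = τ (σ (τ x)) := hστ (τ x)
    _ = x := by rw [h, hτ x]

variable [DecidableEq α]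

def orbit (σ τ : α → α) (x : α) : Finset α := {x, σ x, τ x, σ (τ x)}

lemma mem_orbit_self (x : α) : x ∈ orbit σ τ x := by simp [orbit]

lemma orbit_swap (hστ : Function.Commute σ τ) (x : α) : orbit τ σ x = orbit σ τ x := by
  ext y
  simp only [orbit, mem_insert, mem_singleton, hστ x]
  tauto

lemma orbit_of_apply_eq (hστ : Function.Commute σ τ) {x : α} (hx : σ x = x) :
    orbit σ τ x = {x, τ x} := by
  ext y
  simp only [orbit, mem_insert, mem_singleton, hστ x, hx]
  tauto

lemma orbit_apply_left (hσ : Function.Involutive σ) (hστ : Function.Commute σ τ) (x : α) :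
    orbit σ τ (σ x) = orbit σ τ x := by
  ext y
  simp only [orbit, mem_insert, mem_singleton, hσ x, ← hστ x, hσ (τ x)]
  tauto

lemma orbit_apply_right (hτ : Function.Involutive τ) (hστ : Function.Commute σ τ) (x : α) :
    orbit σ τ (τ x) = orbit σ τ x := by
  rw [← orbit_swap hστ, orbit_apply_left hτ hστ.symm, orbit_swap hστ]

lemma orbit_eq_of_mem (hσ : Function.Involutive σ) (hτ : Function.Involutive τ)
    (hστ : Function.Commute σ τ) {x y : α} (hy : y ∈ orbit σ τ x) : orbit σ τ y = orbit σ τ x := by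
  simp only [orbit, mem_insert, mem_singleton] at hy
  rcases hy with rfl | rfl | rfl | rfl
  · rfl
  · exact orbit_apply_left hσ hστ x
  · exact orbit_apply_right hτ hστ x
  · rw [orbit_apply_left hσ hστ, orbit_apply_right hτ hστ]

lemma orbit_eq_iff_mem (hσ : Function.Involutive σ) (hτ : Function.Involutive τ)
    (hστ : Function.Commute σ τ) {x y : α} : orbit σ τ y = orbit σ τ x ↔ y ∈ orbit σ τ x :=
  ⟨fun h => h ▸ mem_orbit_self y, orbit_eq_of_mem hσ hτ hστ⟩

lemma card_orbit (hσ : Function.Involutive σ) (hτ : Function.Involutive τ)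
    (hστ : Function.Commute σ τ) {x : α} (h : σ (τ x) ≠ x) :
    #(orbit σ τ x) = if σ x = x ∨ τ x = x then 2 else 4 := by
  by_cases h₁ : σ x = x
  · have h₂ : τ x ≠ x := fun h₂ => h (by rw [h₂, h₁])
    rw [orbit_of_apply_eq hστ h₁, card_pair (Ne.symm h₂), if_pos (Or.inl h₁)]
  by_cases h₂ : τ x = x
  · rw [← orbit_swap hστ, orbit_of_apply_eq hστ.symm h₂, card_pair (Ne.symm h₁),
      if_pos (Or.inr h₂)]
  have h₃ : σ x ≠ τ x := fun h₃ => h (by rw [← h₃, hσ x])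
  have h₄ : σ x ≠ σ (τ x) := fun h₄ => h₂ (hσ.injective h₄).symm
  have h₅ : τ x ≠ σ (τ x) := fun h₅ => h₁ (by rw [← hτ (σ x), ← hστ x, ← h₅, hτ x])
  rw [if_neg (by tauto), orbit, card_insert_of_notMem (by simp [Ne.symm h₁, Ne.symm h₂, Ne.symm h]),
    card_insert_of_notMem (by simp [h₃, h₄]), card_pair h₅]

lemma card_filter_orbit_apply_eq (hσ : Function.Involutive σ) (hτ : Function.Involutive τ)
    (hστ : Function.Commute σ τ) {x : α} (h : σ (τ x) ≠ x) :
    #{y ∈ orbit σ τ x | σ y = y} = if σ x = x then 2 else 0 := by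
  by_cases h₁ : σ x = x
  · have h₂ : τ x ≠ x := fun h₂ => h (by rw [h₂, h₁])
    rw [if_pos h₁, filter_true_of_mem, orbit_of_apply_eq hστ h₁, card_pair (Ne.symm h₂)]
    simp [orbit, h₁, hστ x]
  have h₂ : σ (τ x) ≠ τ x := fun h₂ => h₁ (apply_eq_of_apply_apply_eq hτ hστ h₂)
  rw [if_neg h₁, card_eq_zero, filter_eq_empty_iff]
  simp only [orbit, mem_insert, mem_singleton, forall_eq_or_imp, forall_eq, hσ x, hσ (τ x)]
  exact ⟨h₁, Ne.symm h₁, h₂, Ne.symm h₂⟩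

lemma card_filter_orbit_apply_eq_right (hσ : Function.Involutive σ) (hτ : Function.Involutive τ)
    (hστ : Function.Commute σ τ) {x : α} (h : σ (τ x) ≠ x) :
    #{y ∈ orbit σ τ x | τ y = y} = if τ x = x then 2 else 0 := by
  rw [← orbit_swap hστ]
  exact card_filter_orbit_apply_eq hτ hσ hστ.symm (by rwa [← hστ x])

lemma card_orbit_add_card_filter_apply_eq (hσ : Function.Involutive σ) (hτ : Function.Involutive τ)
    (hστ : Function.Commute σ τ) {x : α} (h : σ (τ x) ≠ x) :
    #(orbit σ τ x) + #{y ∈ orbit σ τ x | σ y = y} + #{y ∈ orbit σ τ x | τ y = y} = 4 := by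
  have : ¬ (σ x = x ∧ τ x = x) := fun ⟨h₁, h₂⟩ => h (by rw [h₂, h₁])
  rw [card_orbit hσ hτ hστ h, card_filter_orbit_apply_eq hσ hτ hστ h,
    card_filter_orbit_apply_eq_right hσ hτ hστ h]
  split_ifs <;> tauto

variable {X : Finset α}

lemma orbit_subset (hσX : Set.MapsTo σ X X) (hτX : Set.MapsTo τ X X) {x : α} (hx : x ∈ X) :
    orbit σ τ x ⊆ X := by
  simp only [orbit, insert_subset_iff, singleton_subset_iff]
  exact ⟨hx, hσX hx, hτX hx, hσX (hτX hx)⟩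

lemma card_filter_eq_sum_orbit (hσ : Function.Involutive σ) (hτ : Function.Involutive τ)
    (hστ : Function.Commute σ τ) (hσX : Set.MapsTo σ X X) (hτX : Set.MapsTo τ X X)
    (p : α → Prop) [DecidablePred p] :
    #{x ∈ X | p x} = ∑ o ∈ X.image (orbit σ τ), #{y ∈ o | p y} := by
  rw [card_eq_sum_card_fiberwise (f := orbit σ τ) fun x hx =>
    mem_image_of_mem _ (mem_filter.mp hx).1]
  refine sum_congr rfl fun o ho => ?_
  obtain ⟨x, hx, rfl⟩ := mem_image.mp ho
  congr 1
  ext y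
  simp only [mem_filter, orbit_eq_iff_mem hσ hτ hστ]
  exact ⟨fun ⟨⟨_, hp⟩, hy⟩ => ⟨hy, hp⟩, fun ⟨hy, hp⟩ => ⟨⟨orbit_subset hσX hτX hx hy, hp⟩, hy⟩⟩

lemma card_eq_sum_card_orbit (hσ : Function.Involutive σ) (hτ : Function.Involutive τ)
    (hστ : Function.Commute σ τ) (hσX : Set.MapsTo σ X X) (hτX : Set.MapsTo τ X X) :
    #X = ∑ o ∈ X.image (orbit σ τ), #o := by
  simpa only [filter_true] using card_filter_eq_sum_orbit hσ hτ hστ hσX hτX fun _ => True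

lemma card_add_card_filter_apply_eq_four_mul (hσ : Function.Involutive σ)
    (hτ : Function.Involutive τ) (hστ : Function.Commute σ τ) (hσX : Set.MapsTo σ X X)
    (hτX : Set.MapsTo τ X X) (hfree : ∀ x ∈ X, σ (τ x) ≠ x) :
    #X + #{x ∈ X | σ x = x} + #{x ∈ X | τ x = x} = 4 * #(X.image (orbit σ τ)) := by
  rw [card_eq_sum_card_orbit hσ hτ hστ hσX hτX, card_filter_eq_sum_orbit hσ hτ hστ hσX hτX,
    card_filter_eq_sum_orbit hσ hτ hστ hσX hτX, ← sum_add_distrib, ← sum_add_distrib, mul_comm,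
    ← smul_eq_mul, ← sum_const]
  refine sum_congr rfl fun o ho => ?_
  obtain ⟨x, hx, rfl⟩ := mem_image.mp ho
  exact card_orbit_add_card_filter_apply_eq hσ hτ hστ (hfree x hx)

lemma card_eq_two_mul_card_image_add (hσ : Function.Involutive σ) (hτ : Function.Involutive τ)
    (hστ : Function.Commute σ τ) (hσX : Set.MapsTo σ X X) (hτX : Set.MapsTo τ X X)
    (hfree : ∀ x ∈ X, σ (τ x) ≠ x) :
    #X = 2 * #(X.image (orbit σ τ)) + 2 * #{o ∈ X.image (orbit σ τ) | #o = 4} := by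
  rw [card_eq_sum_card_orbit hσ hτ hστ hσX hτX, card_eq_sum_ones, card_filter, mul_sum, mul_sum,
    ← sum_add_distrib]
  refine sum_congr rfl fun o ho => ?_
  obtain ⟨x, hx, rfl⟩ := mem_image.mp ho
  rw [card_orbit hσ hτ hστ (hfree x hx)]
  split_ifs <;> simp_all

end CommutingInvolutions

open CommutingInvolutions

section Words

variable {A : Type*}

lemma length_antim (θ : A → A) (w : List A) : (antim θ w).length = w.length := by
  simp [antim]

lemma antim_involutive {θ : A → A} (hθ : Function.Involutive θ) :
    Function.Involutive (antim θ) := fun w => by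
  simp [antim, List.map_reverse, Function.comp_def, hθ _]

lemma antim_antim (θ₁ θ₂ : A → A) (w : List A) :
    antim θ₁ (antim θ₂ w) = w.map (θ₁ ∘ θ₂) := by
  simp [antim, List.map_reverse]

lemma antim_commute {θ₁ θ₂ : A → A} (hcomm : θ₁ ∘ θ₂ = θ₂ ∘ θ₁) :
    Function.Commute (antim θ₁) (antim θ₂) := fun w => by
  rw [antim_antim, antim_antim, hcomm]

lemma dropLast_antim (θ : A → A) (w : List A) : (antim θ w).dropLast = antim θ w.tail := by
  rw [antim, antim, List.dropLast_reverse, List.map_tail]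

lemma tail_antim (θ : A → A) (w : List A) : (antim θ w).tail = antim θ w.dropLast := by
  rw [antim, antim, List.tail_reverse, List.map_dropLast]

lemma map_ne_self_of_mem {f : A → A} {w : List A} {c : A} (hc : c ∈ w) (hfc : f c ≠ c) :
    w.map f ≠ w := fun h =>
  hfc (List.map_inj_left.mp (h.trans (List.map_id w).symm) c hc)

lemma exists_apply_apply_ne {θ₁ θ₂ : A → A} (h₂ : Function.Involutive θ₂) (hne : θ₁ ≠ θ₂) :
    ∃ c, θ₁ (θ₂ c) ≠ c := by
  obtain ⟨a, ha⟩ := Function.ne_iff.mp hne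
  exact ⟨θ₂ a, by rwa [h₂ a]⟩

def factorAt (u : ℕ → A) (i m : ℕ) : List A := (List.range m).map fun k => u (i + k)

lemma length_factorAt (u : ℕ → A) (i m : ℕ) : (factorAt u i m).length = m := by
  simp [factorAt]

lemma isFactor_factorAt (u : ℕ → A) (i m : ℕ) : IsFactor u (factorAt u i m) :=
  ⟨i, by rw [OccursAt, length_factorAt]; rfl⟩

lemma IsFactor.exists_eq_factorAt {u : ℕ → A} {w : List A} (hw : IsFactor u w) :
    ∃ i, w = factorAt u i w.length :=
  hw

lemma dropLast_factorAt_succ (u : ℕ → A) (i m : ℕ) :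
    (factorAt u i (m + 1)).dropLast = factorAt u i m := by
  simp [factorAt, List.range_succ]

lemma tail_factorAt_succ (u : ℕ → A) (i m : ℕ) :
    (factorAt u i (m + 1)).tail = factorAt u (i + 1) m := by
  simp only [factorAt, List.range_succ_eq_map, List.map_cons, List.map_map, List.tail_cons]
  exact List.map_congr_left fun k _ => by simp [Nat.add_right_comm, Nat.add_assoc]

lemma mem_factorAt_of_occursAt {u : ℕ → A} {c : A} {i j m : ℕ} (hij : i ≤ j) (hj : j < i + m)
    (hc : OccursAt u [c] j) : c ∈ factorAt u i m := by
  simp only [OccursAt, List.length_singleton, List.range_one, List.map_cons, List.map_nil,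
    List.cons.injEq, add_zero, and_true] at hc
  exact List.mem_map.mpr ⟨j - i, List.mem_range.mpr (by omega), by rw [hc]; congr 1; omega⟩

lemma UniformlyRecurrent.exists_mem_of_lt_length {u : ℕ → A} (hur : UniformlyRecurrent u)
    {c : A} (hc : IsFactor u [c]) : ∃ B, ∀ w, IsFactor u w → B < w.length → c ∈ w := by
  obtain ⟨B, hB⟩ := hur [c] hc
  refine ⟨B, fun w hw hlen => ?_⟩
  obtain ⟨i, hi⟩ := hw.exists_eq_factorAt
  obtain ⟨j, hij, hjB, hocc⟩ := hB i
  rw [hi]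
  exact mem_factorAt_of_occursAt hij (by omega) hocc

section Finite

variable [Finite A]

noncomputable def factorsOfLength (u : ℕ → A) (m : ℕ) : Finset (List A) :=
  ((List.finite_length_eq A m).subset fun _ hw => hw.1 :
    {w : List A | w.length = m ∧ IsFactor u w}.Finite).toFinset

lemma mem_factorsOfLength {u : ℕ → A} {m : ℕ} {w : List A} :
    w ∈ factorsOfLength u m ↔ w.length = m ∧ IsFactor u w := by
  simp [factorsOfLength]

lemma factorAt_mem_factorsOfLength (u : ℕ → A) (i m : ℕ) :
    factorAt u i m ∈ factorsOfLength u m :=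
  mem_factorsOfLength.mpr ⟨length_factorAt u i m, isFactor_factorAt u i m⟩

lemma fC_eq_card (u : ℕ → A) (m : ℕ) : fC u m = #(factorsOfLength u m) := by
  rw [fC, ← Set.ncard_coe_finset, factorsOfLength, Set.Finite.coe_toFinset]

lemma fP_eq_card (u : ℕ → A) (θ : A → A) (m : ℕ) :
    fP u θ m = #{w ∈ factorsOfLength u m | antim θ w = w} := by
  rw [fP, ← Set.ncard_coe_finset]
  congr 1
  ext w
  simp [mem_factorsOfLength, IsPalin, and_assoc]

lemma mapsTo_antim_factorsOfLength {u : ℕ → A} {θ : A → A}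
    (hc : ∀ w, IsFactor u w → IsFactor u (antim θ w)) (m : ℕ) :
    Set.MapsTo (antim θ) (factorsOfLength u m) (factorsOfLength u m) := fun w hw => by
  rw [Finset.mem_coe, mem_factorsOfLength] at hw ⊢
  exact ⟨(length_antim θ w).trans hw.1, hc w hw.2⟩

lemma UniformlyRecurrent.exists_forall_antim_antim_ne {θ₁ θ₂ : A → A} {u : ℕ → A}
    (hur : UniformlyRecurrent u) (h₂ : Function.Involutive θ₂) (hne : θ₁ ≠ θ₂)
    (hall : ∀ a, ∃ i, u i = a) :
    ∃ B, ∀ m, B < m → ∀ w ∈ factorsOfLength u m, antim θ₁ (antim θ₂ w) ≠ w := by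
  obtain ⟨c, hc⟩ := exists_apply_apply_ne h₂ hne
  obtain ⟨i, hi⟩ := hall c
  obtain ⟨B, hB⟩ := hur.exists_mem_of_lt_length (c := c) ⟨i, by simp [OccursAt, hi]⟩
  refine ⟨B, fun m hm w hw => ?_⟩
  obtain ⟨hlen, hfac⟩ := mem_factorsOfLength.mp hw
  rw [antim_antim]
  exact map_ne_self_of_mem (hB w hfac (hlen ▸ hm)) hc

end Finite

noncomputable def orbitEnds (θ₁ θ₂ : A → A) (e : List A) : Sym2 (Finset (List A)) :=
  s(orbit (antim θ₁) (antim θ₂) e.dropLast, orbit (antim θ₁) (antim θ₂) e.tail)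

section OrbitEnds

variable {θ₁ θ₂ θ : A → A}

lemma orbitEnds_antim
    (horb : ∀ w, orbit (antim θ₁) (antim θ₂) (antim θ w) = orbit (antim θ₁) (antim θ₂) w)
    (e : List A) : orbitEnds θ₁ θ₂ (antim θ e) = orbitEnds θ₁ θ₂ e := by
  rw [orbitEnds, dropLast_antim, tail_antim, horb, horb, Sym2.eq_swap]
  rfl

lemma isDiag_orbitEnds_of_antim_eq
    (horb : ∀ w, orbit (antim θ₁) (antim θ₂) (antim θ w) = orbit (antim θ₁) (antim θ₂) w)
    {e : List A} (he : antim θ e = e) : (orbitEnds θ₁ θ₂ e).IsDiag := by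
  rw [orbitEnds, Sym2.mk_isDiag_iff, ← horb, ← tail_antim, he]

lemma orbitEnds_eq_of_mem (h₁ : Function.Involutive θ₁) (h₂ : Function.Involutive θ₂)
    (hcomm : θ₁ ∘ θ₂ = θ₂ ∘ θ₁) {e e' : List A} (he : e' ∈ orbit (antim θ₁) (antim θ₂) e) :
    orbitEnds θ₁ θ₂ e' = orbitEnds θ₁ θ₂ e := by
  have hl := orbitEnds_antim (orbit_apply_left (antim_involutive h₁) (antim_commute hcomm))
  have hr := orbitEnds_antim (orbit_apply_right (antim_involutive h₂) (antim_commute hcomm))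
  simp only [orbit, Finset.mem_insert, Finset.mem_singleton] at he
  rcases he with rfl | rfl | rfl | rfl
  · rfl
  · exact hl e
  · exact hr e
  · exact (hl _).trans (hr e)

end OrbitEnds

lemma SimpleGraph.connected_of_reachable_succ {V : Type*} {G : SimpleGraph V} {f : ℕ → V}
    (hf : Function.Surjective f) (hstep : ∀ i, G.Reachable (f i) (f (i + 1))) : G.Connected := by
  have hreach : ∀ i, G.Reachable (f 0) (f i) := fun i => by
    induction i with
    | zero => rfl
    | succ i ih => exact ih.trans (hstep i)
  refine (SimpleGraph.connected_iff G).mpr ⟨fun s t => ?_, ⟨f 0⟩⟩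
  obtain ⟨i, rfl⟩ := hf s
  obtain ⟨j, rfl⟩ := hf t
  exact (hreach i).symm.trans (hreach j)

section QuotientRauzyGraph

variable [Finite A] {θ₁ θ₂ : A → A}

noncomputable def quotientRauzyGraph (θ₁ θ₂ : A → A) (u : ℕ → A) (n : ℕ) :
    SimpleGraph ((factorsOfLength u n).image (orbit (antim θ₁) (antim θ₂))) :=
  SimpleGraph.fromRel fun s t => ∃ e ∈ factorsOfLength u (n + 1), orbitEnds θ₁ θ₂ e = s(s.1, t.1)

lemma quotientRauzyGraph_connected (θ₁ θ₂ : A → A) (u : ℕ → A) (n : ℕ) :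
    (quotientRauzyGraph θ₁ θ₂ u n).Connected := by
  let vertexAt (i : ℕ) : (factorsOfLength u n).image (orbit (antim θ₁) (antim θ₂)) :=
    ⟨_, Finset.mem_image_of_mem _ (factorAt_mem_factorsOfLength u i n)⟩
  refine SimpleGraph.connected_of_reachable_succ (f := vertexAt) (fun s => ?_) fun i => ?_
  · obtain ⟨w, hw, hws⟩ := Finset.mem_image.mp s.2
    obtain ⟨hlen, hfac⟩ := mem_factorsOfLength.mp hw
    obtain ⟨i, hi⟩ := hfac.exists_eq_factorAt
    exact ⟨i, Subtype.ext (by rw [← hws, hi, hlen])⟩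
  by_cases h : vertexAt i = vertexAt (i + 1)
  · rw [h]
  refine SimpleGraph.Adj.reachable ((SimpleGraph.fromRel_adj _ _ _).mpr
    ⟨h, Or.inl ⟨_, factorAt_mem_factorsOfLength u i (n + 1), ?_⟩⟩)
  rw [orbitEnds, dropLast_factorAt_succ, tail_factorAt_succ]

lemma card_edgeFinset_quotientRauzyGraph_le (h₁ : Function.Involutive θ₁)
    (h₂ : Function.Involutive θ₂) (hcomm : θ₁ ∘ θ₂ = θ₂ ∘ θ₁) {u : ℕ → A} {n : ℕ}
    (hfree : ∀ e ∈ factorsOfLength u (n + 1), antim θ₁ (antim θ₂ e) ≠ e) :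
    #(quotientRauzyGraph θ₁ θ₂ u n).edgeFinset ≤
      #{o ∈ (factorsOfLength u (n + 1)).image (orbit (antim θ₁) (antim θ₂)) | #o = 4} := by
  have hσ := antim_involutive h₁
  have hτ := antim_involutive h₂
  have hστ := antim_commute hcomm
  refine Finset.card_le_card_of_forall_subsingleton
    (fun z o => ∃ e ∈ o, z.map Subtype.val = orbitEnds θ₁ θ₂ e) (fun z hz => ?_) ?_
  · induction z using Sym2.ind with
    | h a b =>
    rw [SimpleGraph.mem_edgeFinset, SimpleGraph.mem_edgeSet, quotientRauzyGraph,
      SimpleGraph.fromRel_adj] at hz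
    obtain ⟨hab, hadj⟩ := hz
    obtain ⟨e, he, hends⟩ : ∃ e ∈ factorsOfLength u (n + 1), orbitEnds θ₁ θ₂ e = s(a.1, b.1) := by
      rcases hadj with ⟨e, he, hends⟩ | ⟨e, he, hends⟩
      exacts [⟨e, he, hends⟩, ⟨e, he, hends.trans Sym2.eq_swap⟩]
    have hloop : ¬ (orbitEnds θ₁ θ₂ e).IsDiag := by
      rw [hends, Sym2.mk_isDiag_iff]
      exact fun h => hab (Subtype.ext h)
    refine ⟨_, Finset.mem_filter.mpr ⟨Finset.mem_image_of_mem _ he, ?_⟩, e,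
      mem_orbit_self e, by rw [hends]; rfl⟩
    rw [card_orbit hσ hτ hστ (hfree e he), if_neg]
    rintro (hp | hp)
    · exact hloop (isDiag_orbitEnds_of_antim_eq (orbit_apply_left hσ hστ) hp)
    · exact hloop (isDiag_orbitEnds_of_antim_eq (orbit_apply_right hτ hστ) hp)
  · intro o ho z ⟨_, e, he, hze⟩ z' ⟨_, e', he', hze'⟩
    obtain ⟨e₀, -, rfl⟩ := Finset.mem_image.mp (Finset.mem_filter.mp ho).1
    refine Sym2.map.injective Subtype.val_injective (hze.trans ?_)
    rw [hze', orbitEnds_eq_of_mem h₁ h₂ hcomm he, orbitEnds_eq_of_mem h₁ h₂ hcomm he']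

lemma card_image_orbit_le (h₁ : Function.Involutive θ₁) (h₂ : Function.Involutive θ₂)
    (hcomm : θ₁ ∘ θ₂ = θ₂ ∘ θ₁) {u : ℕ → A} {n : ℕ}
    (hfree : ∀ e ∈ factorsOfLength u (n + 1), antim θ₁ (antim θ₂ e) ≠ e) :
    #((factorsOfLength u n).image (orbit (antim θ₁) (antim θ₂))) ≤
      #{o ∈ (factorsOfLength u (n + 1)).image (orbit (antim θ₁) (antim θ₂)) | #o = 4} + 1 := by
  have h := (quotientRauzyGraph_connected θ₁ θ₂ u n).card_vert_le_card_edgeSet_add_one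
  rw [Nat.card_eq_finsetCard, Nat.card_eq_fintype_card, SimpleGraph.card_edgeSet] at h
  exact h.trans (Nat.add_le_add_right (card_edgeFinset_quotientRauzyGraph_le h₁ h₂ hcomm hfree) 1)

end QuotientRauzyGraph

end Words

/-- If a uniformly recurrent infinite word `u` has its language
closed under two distinct commuting involutive antimorphisms `Θ₁`, `Θ₂`, then
`ΔC(n) + 4 ≥ P_{Θ₁}(n) + P_{Θ₂}(n) + P_{Θ₁}(n+1) + P_{Θ₂}(n+1)` for all large `n`. -/
theorem two_antimorphisms_uniformly_recurrent_inequality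
    {A : Type*} [Fintype A] (θ₁ θ₂ : A → A)
    (h₁ : Function.Involutive θ₁) (h₂ : Function.Involutive θ₂)
    (hne : θ₁ ≠ θ₂) (hcomm : θ₁ ∘ θ₂ = θ₂ ∘ θ₁)
    (u : ℕ → A) (hall : ∀ a : A, ∃ i, u i = a)
    (hur : UniformlyRecurrent u)
    (hc₁ : ∀ w : List A, IsFactor u w → IsFactor u (antim θ₁ w))
    (hc₂ : ∀ w : List A, IsFactor u w → IsFactor u (antim θ₂ w)) :
    ∃ N : ℕ, ∀ n : ℕ, N < n →
      (fC u (n+1) : ℤ) - fC u n + 4 ≥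
        (fP u θ₁ n : ℤ) + fP u θ₂ n + fP u θ₁ (n+1) + fP u θ₂ (n+1) := by
  obtain ⟨B, hfree⟩ := hur.exists_forall_antim_antim_ne h₂ hne hall
  have hσ := antim_involutive h₁
  have hτ := antim_involutive h₂
  have hστ := antim_commute hcomm
  have hσX := mapsTo_antim_factorsOfLength hc₁
  have hτX := mapsTo_antim_factorsOfLength hc₂
  refine ⟨B, fun n hn => ?_⟩
  have hfree₁ := hfree (n + 1) (by omega)
  have hcount := card_add_card_filter_apply_eq_four_mul hσ hτ hστ (hσX n) (hτX n) (hfree n hn)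
  have hcount₁ :=
    card_add_card_filter_apply_eq_four_mul hσ hτ hστ (hσX (n + 1)) (hτX (n + 1)) hfree₁
  have hsize := card_eq_two_mul_card_image_add hσ hτ hστ (hσX (n + 1)) (hτX (n + 1)) hfree₁
  have hgraph := card_image_orbit_le h₁ h₂ hcomm hfree₁
  simp only [fC_eq_card, fP_eq_card]
  omega
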